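/- arXiv:2203.07279 — 2 statements merged into one kernel-verified Lean document; each statement's English description precedes it below -/
import Mathlib

section
/- In any lexicographic mixed instance, every Pareto optimal complete allocation is sequencible. -/
attribute [local instance 10] Classical.propDecidable

/-- A lexicographic mixed instance: each agent `i` has a set `G i` of goods
(its complement being the chores `C i`) and a strict linear importance order
`⊳_i` on the items, encoded as a linear order where larger means more important. -/
structure LexInstance (N M : Type) [Fintype N] [Fintype M] [DecidableEq M] where
  G : N → Finset M
  ord : N → LinearOrder M

namespace LexInstance

variable {N M : Type} [Fintype N] [Fintype M] [DecidableEq M]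

/-- `inst.imp i a b` means `a ⊳_i b` : `a` is more important than `b` for agent `i`. -/
def imp (inst : LexInstance N M) (i : N) (a b : M) : Prop := (inst.ord i).lt b a

/-- The chores of agent `i`. -/
def C (inst : LexInstance N M) (i : N) : Finset M := (inst.G i)ᶜ

/-- Strict lexicographic preference `X ≻_i Y`. -/
def SPref (inst : LexInstance N M) (i : N) (X Y : Finset M) : Prop :=
  (∃ g ∈ inst.G i ∩ (X \ Y), ∀ o ∈ Y ∩ inst.G i, inst.imp i o g → o ∈ X) ∨
  (∃ c ∈ inst.C i ∩ (Y \ X), ∀ o ∈ X ∩ inst.C i, inst.imp i o c → o ∈ Y)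

/-- Weak lexicographic preference `X ⪰_i Y`. -/
def WPref (inst : LexInstance N M) (i : N) (X Y : Finset M) : Prop :=
  inst.SPref i X Y ∨ X = Y

/-- A (complete) allocation: pairwise disjoint bundles whose union is all of `M`. -/
def IsAllocation (_inst : LexInstance N M) (A : N → Finset M) : Prop :=
  (∀ i j, i ≠ j → Disjoint (A i) (A j)) ∧ ∀ o : M, ∃ i, o ∈ A i

/-- Pareto optimality of a (complete) allocation. -/
def ParetoOptimal (inst : LexInstance N M) (A : N → Finset M) : Prop :=
  ¬ ∃ B : N → Finset M, inst.IsAllocation B ∧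
      (∀ i, inst.WPref i (B i) (A i)) ∧ ∃ h, inst.SPref h (B h) (A h)

/-- The item agent `i` picks from the remaining set `R`: its `⊳_i`-greatest
remaining good if there is one, and otherwise the `⊳_i`-least remaining item. -/
noncomputable def pickOne (inst : LexInstance N M) (i : N) (R : Finset M)
    (h : R.Nonempty) : M :=
  if hg : (R ∩ inst.G i).Nonempty then @Finset.max' M (inst.ord i) (R ∩ inst.G i) hg
  else @Finset.min' M (inst.ord i) R h

/-- Run the picking procedure along a sequence of agents, starting from the
remaining items `R`; returns the resulting bundles. -/
noncomputable def runPick (inst : LexInstance N M) : List N → Finset M → N → Finset M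
  | [], _ => fun _ => ∅
  | i :: rest, R =>
    if h : R.Nonempty then
      fun j =>
        runPick inst rest (R.erase (inst.pickOne i R h)) j ∪
          (if j = i then {inst.pickOne i R h} else ∅)
    else fun _ => ∅

/-- An allocation is sequencible if it is produced by some picking sequence of
length `|M|` starting from all items. -/
def Sequencible (inst : LexInstance N M) (A : N → Finset M) : Prop :=
  ∃ s : List N, s.length = Fintype.card M ∧ inst.runPick s Finset.univ = A

/-- A chores-only instance: every item is a chore for every agent. -/
def ChoresOnly (inst : LexInstance N M) : Prop := ∀ i, inst.G i = ∅

/-- Envy-freeness up to any item. -/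
def EFX (inst : LexInstance N M) (A : N → Finset M) : Prop :=
  ∀ i h : N,
    (∀ o ∈ A h ∩ inst.G i, inst.WPref i (A i) ((A h).erase o)) ∧
    (∀ o ∈ A i ∩ inst.C i, inst.WPref i ((A i).erase o) (A h))

/-- Envy-freeness up to any chore. -/
def EFXc (inst : LexInstance N M) (A : N → Finset M) : Prop :=
  ∀ i h : N, ∀ o ∈ A i ∩ inst.C i, inst.WPref i ((A i).erase o) (A h)

/-- Envy-freeness up to one item. -/
def EF1 (inst : LexInstance N M) (A : N → Finset M) : Prop :=
  ∀ i h : N, ((A i ∩ inst.C i) ∪ (A h ∩ inst.G i)).Nonempty →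
    ∃ o ∈ (A i ∩ inst.C i) ∪ (A h ∩ inst.G i),
      inst.WPref i (A i) ((A h).erase o) ∨ inst.WPref i ((A i).erase o) (A h)

/-- `A` gives every agent at least its maximin share: for every partition `P`
of the items into `n` bundles, agent `i` weakly prefers `A i` to some bundle of
`P` (hence to the `⪰_i`-least bundle of `P`). -/
def MMSfair (inst : LexInstance N M) (A : N → Finset M) : Prop :=
  ∀ i, ∀ P : N → Finset M, inst.IsAllocation P → ∃ j, inst.WPref i (A i) (P j)

/-- `B` is the maximin share `MMS_i` of agent `i`: `B` is the `⪰_i`-least bundle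
of some partition of `M` into `n` bundles, and every such partition contains a
bundle to which `B` is weakly preferred. -/
def IsMMSBundle (inst : LexInstance N M) (i : N) (B : Finset M) : Prop :=
  (∃ P : N → Finset M, inst.IsAllocation P ∧ (∃ j, P j = B) ∧
      ∀ j, inst.WPref i (P j) B) ∧
  (∀ P : N → Finset M, inst.IsAllocation P → ∃ j, inst.WPref i B (P j))

/-- The `k`-th (0-indexed) `⊳_i`-greatest good of agent `i`, if any. -/
noncomputable def kthGood (inst : LexInstance N M) (i : N) (k : ℕ) : Option M :=
  letI : LinearOrder M := inst.ord i
  (((inst.G i).sort (· ≤ ·)).reverse)[k]?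

/-- The `k`-th (0-indexed) `⊳_i`-least chore of agent `i`, if any. -/
noncomputable def kthChore (inst : LexInstance N M) (i : N) (k : ℕ) : Option M :=
  letI : LinearOrder M := inst.ord i
  ((inst.C i).sort  (· ≤ ·))[k]?

/-- Number of agents receiving their `k`-th (0-indexed) greatest good. -/
noncomputable def nPlus (inst : LexInstance N M) (A : N → Finset M) (k : ℕ) : ℕ :=
  (Finset.univ.filter fun i => (inst.kthGood i k).elim False (· ∈ A i)).card

/-- Number of agents receiving their `k`-th (0-indexed) least chore. -/
noncomputable def nMinus (inst : LexInstance N M) (A : N → Finset M) (k : ℕ) : ℕ :=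
  (Finset.univ.filter fun i => (inst.kthChore i k).elim False (· ∈ A i)).card

/-- The rank signature `(n_1^+, …, n_m^+, n_1^-, …, n_m^-)` of an allocation. -/
noncomputable def signature (inst : LexInstance N M) (A : N → Finset M) : List ℕ :=
  ((List.range (Fintype.card M)).map fun k => inst.nPlus A k) ++
    ((List.range (Fintype.card M)).map fun k => inst.nMinus A k)

/-- Rank-maximality: the signature is lexicographically maximal over allocations. -/
def RankMaximal (inst : LexInstance N M) (A : N → Finset M) : Prop :=
  inst.IsAllocation A ∧ ∀ B : N → Finset M, inst.IsAllocation B →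
    ¬ List.Lex (· < ·) (inst.signature A) (inst.signature B)

end LexInstance

/-- The set of the `k` greatest (most important) elements of `S` under `L`. -/
def topK {M : Type} [DecidableEq M] (L : LinearOrder M) (S : Finset M) (k : ℕ) :
    Finset M :=
  letI := L
  S.filter fun o => (S.filter fun o' => o < o').card < k

/-- Build a linear order on `Fin m` from an injective ranking function
(larger value = more important). -/
def mkOrd {m : ℕ} (f : Fin m → ℕ) (hf : Function.Injective f) : LinearOrder (Fin m) :=
  LinearOrder.lift' f hf

/-!
Encode an allocation by its owner map `ω : M → N`. It suffices to find, in a Pareto optimal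
allocation, an agent whose pick from the remaining items `R` already belongs to them: let them pick
it and recurse on `R.erase o`, on which the allocation is still Pareto optimal. Suppose no pick is
owned by its picker. If some agent's top remaining good is a chore for its owner, handing it over
helps both. Otherwise each agent with a good left wants an item that is a good of its owner, so
the owner too has a good left; and if nobody has a good left, everybody wants its least chore.
In both cases following "wanted item ↦ owner" inside a finite set closes a cycle, and passing
the wanted items along the cycle improves everyone on it.
-/

theorem Finset.exists_subset_image_eq_self {α : Type*} [DecidableEq α] (f : α → α)
    {S : Finset α} (hS : S.Nonempty) (hmaps : ∀ a ∈ S, f a ∈ S) :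
    ∃ T ⊆ S, T.Nonempty ∧ T.image f = T := by
  induction S using Finset.strongInduction with
  | H S ih =>
    have hsub : S.image f ⊆ S := Finset.image_subset_iff.2 hmaps
    by_cases heq : S.image f = S
    · exact ⟨S, subset_rfl, hS, heq⟩
    · obtain ⟨T, hT, hTne, hTf⟩ := ih _ (hsub.ssubset_of_ne heq) (hS.image f)
        (fun a ha => Finset.mem_image_of_mem f (hsub ha))
      exact ⟨T, hT.trans hsub, hTne, hTf⟩

section Owner

variable {N M : Type} [Fintype M]

noncomputable def bundleOf (ω : M → N) (i : N) : Finset M :=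
  Finset.univ.filter fun o => ω o = i

@[simp]
lemma mem_bundleOf {ω : M → N} {i : N} {o : M} : o ∈ bundleOf ω i ↔ ω o = i := by
  simp [bundleOf]

variable [DecidableEq M]

lemma bundleOf_update (ω : M → N) (o : M) (i j : N) :
    bundleOf (Function.update ω o i) j =
      if j = i then insert o (bundleOf ω j) else (bundleOf ω j).erase o := by
  ext p
  by_cases hp : p = o <;> split_ifs <;> simp_all [Function.update_of_ne, eq_comm]

/-- `hT` says that the owners of the wanted items `x i` permute `T`; in `ω'` every `i ∈ T` has
received `x i`. -/
lemma bundleOf_trade {ω ω' : M → N} {T : Finset N} {x : N → M}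
    (hT : T.image (fun i => ω (x i)) = T)
    (hω'x : ∀ i ∈ T, ω' (x i) = i) (hω' : ∀ o ∉ T.image x, ω' o = ω o)
    {k : N} (hk : k ∈ T) :
    bundleOf ω' (ω (x k)) = insert (x (ω (x k))) ((bundleOf ω (ω (x k))).erase (x k)) := by
  have hmaps : ω (x k) ∈ T := hT ▸ Finset.mem_image_of_mem _ hk
  have hinj : Set.InjOn (fun i => ω (x i)) T := Finset.card_image_iff.1 (by rw [hT])
  ext o
  simp only [mem_bundleOf, Finset.mem_insert, Finset.mem_erase]
  by_cases ho : o ∈ T.image x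
  · obtain ⟨i, hi, rfl⟩ := Finset.mem_image.1 ho
    rw [hω'x i hi]
    constructor
    · rintro rfl
      exact Or.inl rfl
    · rintro (h | ⟨hik, h⟩)
      · exact hinj hi hmaps (by simp only [h])
      · exact absurd (congrArg x (hinj hi hk h)) hik
  · have h₁ : o ≠ x (ω (x k)) := fun h => ho (h ▸ Finset.mem_image_of_mem x hmaps)
    have h₂ : o ≠ x k := fun h => ho (h ▸ Finset.mem_image_of_mem x hk)
    simp [hω' o ho, h₁, h₂]

lemma bundleOf_trade_of_notMem {ω ω' : M → N} {T : Finset N} {x : N → M}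
    (hT : T.image (fun i => ω (x i)) = T)
    (hω'x : ∀ i ∈ T, ω' (x i) = i) (hω' : ∀ o ∉ T.image x, ω' o = ω o)
    {j : N} (hj : j ∉ T) :
    bundleOf ω' j = bundleOf ω j := by
  ext o
  simp only [mem_bundleOf]
  by_cases ho : o ∈ T.image x
  · obtain ⟨i, hi, rfl⟩ := Finset.mem_image.1 ho
    rw [hω'x i hi]
    exact iff_of_false (fun h => hj (h ▸ hi))
      (fun h => hj (h ▸ hT ▸ Finset.mem_image_of_mem _ hi))
  · rw [hω' o ho]

end Owner

namespace LexInstance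

variable {N M : Type} [Fintype N] [Fintype M] [DecidableEq M] (inst : LexInstance N M)

lemma isAllocation_bundleOf (ω : M → N) : inst.IsAllocation (bundleOf ω) :=
  ⟨fun i j hij => Finset.disjoint_left.2 fun o hi hj => hij (by simp_all),
    fun o => ⟨ω o, by simp⟩⟩

variable {inst} in
lemma IsAllocation.exists_eq_bundleOf {A : N → Finset M} (hA : inst.IsAllocation A) :
    ∃ ω : M → N, A = bundleOf ω := by
  choose ω hω using hA.2
  refine ⟨ω, funext fun i => Finset.ext fun o => ⟨fun ho => ?_, fun ho => ?_⟩⟩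
  · by_contra hne
    exact Finset.disjoint_left.1 (hA.1 _ _ (by simpa using hne)) (hω o) ho
  · rw [mem_bundleOf] at ho
    exact ho ▸ hω o

lemma imp_asymm {i : N} {a b : M} (hab : inst.imp i a b) : ¬ inst.imp i b a := by
  let _ := inst.ord i
  exact lt_asymm hab

lemma sPref_insert_of_mem_G {i : N} {g : M} {X : Finset M} (hg : g ∈ inst.G i)
    (hgX : g ∉ X) : inst.SPref i (insert g X) X :=
  Or.inl ⟨g, by simp [hg, hgX],
    fun _ ho _ => Finset.mem_insert_of_mem (Finset.mem_inter.1 ho).1⟩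

lemma sPref_erase_of_mem_C {i : N} {c : M} {X : Finset M} (hc : c ∈ inst.C i)
    (hcX : c ∈ X) : inst.SPref i (X.erase c) X :=
  Or.inr ⟨c, by simp [hc, hcX],
    fun _ ho _ => Finset.mem_of_mem_erase (Finset.mem_inter.1 ho).1⟩

lemma sPref_swap_of_mem_G {i : N} {g g' : M} {X : Finset M} (hg : g ∈ inst.G i)
    (hgX : g ∉ X) (hg'X : g' ∈ X) (hgg' : inst.imp i g g') :
    inst.SPref i (insert g (X.erase g')) X := by
  refine Or.inl ⟨g, by simp [hg, hgX], fun o ho hog => ?_⟩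
  have hne : o ≠ g' := by
    rintro rfl
    exact inst.imp_asymm hgg' hog
  exact Finset.mem_insert_of_mem (Finset.mem_erase.2 ⟨hne, (Finset.mem_inter.1 ho).1⟩)

lemma sPref_swap_of_mem_C {i : N} {c c' : M} {X : Finset M} (hc : c ∈ inst.C i)
    (hcX : c ∈ X) (hc'X : c' ∉ X) (hcc' : inst.imp i c c') :
    inst.SPref i (insert c' (X.erase c)) X := by
  have hne : c ≠ c' := by
    rintro rfl
    exact hc'X hcX
  refine Or.inr ⟨c, by simp [hc, hcX, hne], fun o ho hoc => ?_⟩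
  rcases Finset.mem_insert.1 (Finset.mem_inter.1 ho).1 with rfl | hoX
  · exact absurd hoc (inst.imp_asymm hcc')
  · exact Finset.mem_of_mem_erase hoX

lemma pickOne_mem (i : N) {R : Finset M} (hR : R.Nonempty) : inst.pickOne i R hR ∈ R := by
  let _ := inst.ord i
  unfold pickOne
  split_ifs with hg
  · exact Finset.mem_of_mem_inter_left (Finset.max'_mem _ hg)
  · exact Finset.min'_mem R hR

lemma pickOne_mem_G {i : N} {R : Finset M} (hR : R.Nonempty) (hg : (R ∩ inst.G i).Nonempty) :
    inst.pickOne i R hR ∈ inst.G i := by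
  let _ := inst.ord i
  rw [pickOne, dif_pos hg]
  exact Finset.mem_of_mem_inter_right (Finset.max'_mem _ hg)

lemma pickOne_imp_of_mem_G {i : N} {R : Finset M} (hR : R.Nonempty) {o : M} (hoR : o ∈ R)
    (hoG : o ∈ inst.G i) (hne : o ≠ inst.pickOne i R hR) :
    inst.imp i (inst.pickOne i R hR) o := by
  let _ := inst.ord i
  have hg : (R ∩ inst.G i).Nonempty := ⟨o, Finset.mem_inter.2 ⟨hoR, hoG⟩⟩
  rw [pickOne, dif_pos hg] at hne ⊢
  exact lt_of_le_of_ne (Finset.le_max' _ o (Finset.mem_inter.2 ⟨hoR, hoG⟩)) hne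

lemma imp_pickOne_of_no_goods {i : N} {R : Finset M} (hR : R.Nonempty) (hg : R ∩ inst.G i = ∅)
    {o : M} (hoR : o ∈ R) (hne : o ≠ inst.pickOne i R hR) :
    inst.imp i o (inst.pickOne i R hR) := by
  let _ := inst.ord i
  rw [pickOne, dif_neg (by simp [hg])] at hne ⊢
  exact lt_of_le_of_ne (Finset.min'_le R o hoR) hne.symm

def Dominates (ω' ω : M → N) : Prop :=
  (∀ i, inst.WPref i (bundleOf ω' i) (bundleOf ω i)) ∧
    ∃ h, inst.SPref h (bundleOf ω' h) (bundleOf ω h)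

/-- The items outside `R` have already been picked: their owners are frozen. -/
def ParetoOptimalOn (R : Finset M) (ω : M → N) : Prop :=
  ∀ ω' : M → N, (∀ o ∉ R, ω' o = ω o) → ¬ inst.Dominates ω' ω

variable {inst} in
lemma ParetoOptimalOn.mono {R R' : Finset M} {ω : M → N} (hPO : inst.ParetoOptimalOn R ω)
    (hR' : R' ⊆ R) : inst.ParetoOptimalOn R' ω :=
  fun ω' hω' => hPO ω' fun o ho => hω' o fun h => ho (hR' h)

variable {inst} in
lemma ParetoOptimal.paretoOptimalOn_univ {ω : M → N}
    (hPO : inst.ParetoOptimal (bundleOf ω)) : inst.ParetoOptimalOn Finset.univ ω :=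
  fun ω' _ hdom => hPO ⟨bundleOf ω', inst.isAllocation_bundleOf ω', hdom⟩

lemma dominates_update {ω : M → N} {o : M} {i : N} (hg : o ∈ inst.G i)
    (hc : o ∈ inst.C (ω o)) : inst.Dominates (Function.update ω o i) ω := by
  have hne : ω o ≠ i := by
    rintro rfl
    exact Finset.mem_compl.1 hc hg
  have hgain : inst.SPref i (insert o (bundleOf ω i)) (bundleOf ω i) :=
    inst.sPref_insert_of_mem_G hg (by simpa using hne)
  refine ⟨fun j => ?_, i, by rw [bundleOf_update, if_pos rfl]; exact hgain⟩
  rw [bundleOf_update]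
  split_ifs with hj
  · exact Or.inl (hj ▸ hgain)
  · by_cases hjo : ω o = j
    · exact Or.inl (hjo ▸ inst.sPref_erase_of_mem_C hc (by simp))
    · exact Or.inr (Finset.erase_eq_of_notMem (by simpa using hjo))

lemma not_paretoOptimalOn_of_transfer {R : Finset M} {ω : M → N} {o : M} {i : N}
    (hoR : o ∈ R) (hg : o ∈ inst.G i) (hc : o ∈ inst.C (ω o)) :
    ¬ inst.ParetoOptimalOn R ω := fun hPO =>
  hPO _ (fun _ hp => Function.update_of_ne (ne_of_mem_of_not_mem hoR hp).symm _ _)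
    (inst.dominates_update hg hc)

lemma dominates_of_trade {ω ω' : M → N} {T : Finset N} (hTne : T.Nonempty) {x : N → M}
    (hT : T.image (fun i => ω (x i)) = T)
    (hω'x : ∀ i ∈ T, ω' (x i) = i) (hω' : ∀ o ∉ T.image x, ω' o = ω o)
    (himp : ∀ k ∈ T, inst.SPref (ω (x k))
      (insert (x (ω (x k))) ((bundleOf ω (ω (x k))).erase (x k))) (bundleOf ω (ω (x k)))) :
    inst.Dominates ω' ω := by
  have hgain : ∀ j ∈ T, inst.SPref j (bundleOf ω' j) (bundleOf ω j) := by
    intro j hj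
    obtain ⟨k, hk, rfl⟩ := Finset.mem_image.1 (hT.symm ▸ hj)
    exact bundleOf_trade hT hω'x hω' hk ▸ himp k hk
  obtain ⟨i₀, hi₀⟩ := hTne
  refine ⟨fun j => ?_, i₀, hgain i₀ hi₀⟩
  by_cases hj : j ∈ T
  · exact Or.inl (hgain j hj)
  · exact Or.inr (bundleOf_trade_of_notMem hT hω'x hω' hj)

lemma not_paretoOptimalOn_of_trade {R : Finset M} {ω : M → N} {S : Finset N}
    (hS : S.Nonempty) {x : N → M} (hxR : ∀ i ∈ S, x i ∈ R)
    (hmaps : ∀ i ∈ S, ω (x i) ∈ S)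
    (himp : ∀ k ∈ S, inst.SPref (ω (x k))
      (insert (x (ω (x k))) ((bundleOf ω (ω (x k))).erase (x k))) (bundleOf ω (ω (x k)))) :
    ¬ inst.ParetoOptimalOn R ω := by
  intro hPO
  obtain ⟨T, hTS, hTne, hT⟩ := Finset.exists_subset_image_eq_self (fun i => ω (x i)) hS hmaps
  have hxinj : Set.InjOn x T := fun i hi j hj h =>
    Finset.card_image_iff.1 (by rw [hT]) hi hj (by simp only [h])
  let ω' : M → N := fun o => if h : ∃ i ∈ T, x i = o then h.choose else ω o
  have hω'x : ∀ i ∈ T, ω' (x i) = i := by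
    intro i hi
    have h : ∃ j ∈ T, x j = x i := ⟨i, hi, rfl⟩
    simp only [ω', dif_pos h]
    exact hxinj h.choose_spec.1 hi h.choose_spec.2
  have hω' : ∀ o ∉ T.image x, ω' o = ω o := fun o ho => dif_neg (by simpa using ho)
  refine hPO ω' (fun o ho => hω' o fun h => ho ?_)
    (inst.dominates_of_trade hTne hT hω'x hω' fun k hk => himp k (hTS hk))
  obtain ⟨i, hi, rfl⟩ := Finset.mem_image.1 h
  exact hxR i (hTS hi)

theorem exists_owner_pickOne {R : Finset M} (hR : R.Nonempty) {ω : M → N}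
    (hPO : inst.ParetoOptimalOn R ω) : ∃ i, ω (inst.pickOne i R hR) = i := by
  by_contra! hx
  set x : N → M := fun i => inst.pickOne i R hR
  have hxR : ∀ i, x i ∈ R := fun i => inst.pickOne_mem i hR
  have hx_ne : ∀ k, x k ≠ x (ω (x k)) := fun k h => hx (ω (x k)) (congrArg ω h).symm
  have hx_notMem : ∀ k, x (ω (x k)) ∉ bundleOf ω (ω (x k)) := fun k => by simpa using hx _
  by_cases hgoods : ∃ i, (R ∩ inst.G i).Nonempty
  · by_cases htransfer : ∃ i, (R ∩ inst.G i).Nonempty ∧ x i ∈ inst.C (ω (x i))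
    · obtain ⟨i, hi, hc⟩ := htransfer
      exact inst.not_paretoOptimalOn_of_transfer (hxR i) (inst.pickOne_mem_G hR hi) hc hPO
    push Not at htransfer
    have hG : ∀ i, (R ∩ inst.G i).Nonempty → x i ∈ inst.G (ω (x i)) := by
      simpa [C] using htransfer
    have hG_owner : ∀ i, (R ∩ inst.G i).Nonempty → (R ∩ inst.G (ω (x i))).Nonempty :=
      fun i hi => ⟨x i, Finset.mem_inter.2 ⟨hxR i, hG i hi⟩⟩
    obtain ⟨i₀, hi₀⟩ := hgoods
    let S := Finset.univ.filter fun i => (R ∩ inst.G i).Nonempty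
    have hmemS : ∀ {i}, i ∈ S ↔ (R ∩ inst.G i).Nonempty := by simp [S]
    refine inst.not_paretoOptimalOn_of_trade (S := S) ⟨i₀, hmemS.2 hi₀⟩ (fun i _ => hxR i)
      (fun i hi => hmemS.2 (hG_owner i (hmemS.1 hi))) (fun k hk => ?_) hPO
    exact inst.sPref_swap_of_mem_G (inst.pickOne_mem_G hR (hG_owner k (hmemS.1 hk))) (hx_notMem k)
      (by simp) (inst.pickOne_imp_of_mem_G hR (hxR k) (hG k (hmemS.1 hk)) (hx_ne k))
  · push Not at hgoods
    obtain ⟨o, -⟩ := id hR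
    refine inst.not_paretoOptimalOn_of_trade (S := Finset.univ) ⟨ω o, Finset.mem_univ _⟩
      (fun i _ => hxR i) (fun _ _ => Finset.mem_univ _) (fun k _ => ?_) hPO
    have hc : x k ∈ inst.C (ω (x k)) := Finset.mem_compl.2 fun hg =>
      Finset.eq_empty_iff_forall_notMem.1 (hgoods _) (x k) (Finset.mem_inter.2 ⟨hxR k, hg⟩)
    exact inst.sPref_swap_of_mem_C hc (by simp) (hx_notMem k)
      (inst.imp_pickOne_of_no_goods hR (hgoods _) (hxR k) (hx_ne k))

theorem exists_runPick_eq_filter {ω : M → N} (R : Finset M) (hPO : inst.ParetoOptimalOn R ω) :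
    ∃ s : List N, s.length = R.card ∧
      inst.runPick s R = fun j => R.filter fun o => ω o = j := by
  induction R using Finset.strongInduction with
  | H R ih =>
  rcases R.eq_empty_or_nonempty with rfl | hR
  · exact ⟨[], rfl, by funext j; simp [runPick]⟩
  obtain ⟨i, hi⟩ := inst.exists_owner_pickOne hR hPO
  set o := inst.pickOne i R hR
  have ho : o ∈ R := inst.pickOne_mem i hR
  obtain ⟨s, hlen, hrun⟩ := ih _ (Finset.erase_ssubset ho) (hPO.mono (R.erase_subset o))
  refine ⟨i :: s, by rw [List.length_cons, hlen, Finset.card_erase_add_one ho],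
    funext fun j => ?_⟩
  rw [runPick, dif_pos hR]
  change inst.runPick s (R.erase o) j ∪ _ = _
  rw [congrFun hrun j, Finset.filter_erase]
  split_ifs with hj
  · subst hj
    rw [Finset.union_singleton, Finset.insert_erase (Finset.mem_filter.2 ⟨ho, hi⟩)]
  · rw [Finset.union_empty, Finset.erase_eq_of_notMem (by simp [hi, Ne.symm hj])]

end LexInstance

/-- In any lexicographic mixed instance, every Pareto optimal
complete allocation is sequencible. -/
theorem po_implies_sequencible
    {N M : Type} [Fintype N] [Fintype M] [DecidableEq M]
    (inst : LexInstance N M)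
    (A : N → Finset M) (hA : inst.IsAllocation A) (hPO : inst.ParetoOptimal A) :
    inst.Sequencible A := by
  obtain ⟨ω, rfl⟩ := hA.exists_eq_bundleOf
  exact inst.exists_runPick_eq_filter Finset.univ hPO.paretoOptimalOn_univ
end

section
/- In a chores-only lexicographic instance, let A be a rank-maximal allocation and suppose some agent i receives its worst chore, i.e., the ⊳_i-greatest element o of M belongs to A_i. Then o is the worst chore of every agent: o is the ⊳_j-greatest element of M for every agent j ∈ N. -/
attribute [local instance 10] Classical.propDecidable

/-!
Chore ranks count from the least important item, starting at 0. As `o` is agent `i`'s worst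
chore, it has rank `|M| - 1` for `i`; if it were not `j`'s worst chore, it would have some rank
`r < |M| - 1` for `j`. Handing `o` from `i` to `j` then leaves every `n_k^-` with `k < r`
unchanged and raises `n_r^-` by one, while all `n_k^+` vanish in a chores-only instance. The
signature strictly increases, contradicting rank-maximality.
-/

theorem List.lex_map_range {α : Type*} (R : α → α → Prop) {f g : ℕ → α} {n p : ℕ}
    (hp : p < n) (heq : ∀ q < p, f q = g q) (hlt : R (f p) (g p)) :
    List.Lex R ((List.range n).map f) ((List.range n).map g) := by
  induction p generalizing n f g with
  | zero =>
    obtain ⟨n, rfl⟩ := Nat.exists_eq_add_one_of_ne_zero hp.ne_bot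
    simpa only [List.range_succ_eq_map, List.map_cons] using List.Lex.rel hlt
  | succ p ih =>
    obtain ⟨n, rfl⟩ := Nat.exists_eq_add_one_of_ne_zero (Nat.ne_zero_of_lt hp)
    simp only [List.range_succ_eq_map, List.map_cons, List.map_map, heq 0 p.succ_pos]
    exact .cons (ih (by omega) (fun q hq => heq (q + 1) (by omega)) hlt)

def reassign {N M : Type} [DecidableEq N] [DecidableEq M] (A : N → Finset M) (o : M) (j : N) :
    N → Finset M :=
  fun t => if t = j then insert o (A t) else (A t).erase o

theorem mem_reassign {N M : Type} [DecidableEq N] [DecidableEq M] {A : N → Finset M} {o x : M}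
    {j t : N} : x ∈ reassign A o j t ↔ x = o ∧ t = j ∨ x ≠ o ∧ x ∈ A t := by
  unfold reassign
  split_ifs with ht <;> by_cases hx : x = o <;> simp [ht, hx]

namespace LexInstance

variable {N M : Type} [Fintype N] [Fintype M] [DecidableEq M] {inst : LexInstance N M}

section kthChore

variable {t : N} {k k' : ℕ} {x : M}

theorem kthChore_inj (h : inst.kthChore t k = some x) (h' : inst.kthChore t k' = some x) :
    k = k' := by
  let := inst.ord t
  have hk : k < ((inst.C t).sort (· ≤ ·)).length := (List.getElem?_eq_some_iff.1 h).1
  exact (List.getElem?_inj hk (Finset.sort_nodup _ _)).1 (h.trans h'.symm)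

theorem kthChore_lt_card (h : inst.kthChore t k = some x) : k < Fintype.card M := by
  let := inst.ord t
  have hk : k < ((inst.C t).sort (· ≤ ·)).length := (List.getElem?_eq_some_iff.1 h).1
  rw [Finset.length_sort] at hk
  exact hk.trans_le (Finset.card_le_univ _)

theorem exists_kthChore_eq_some (hx : x ∈ inst.C t) : ∃ k, inst.kthChore t k = some x := by
  let := inst.ord t
  exact List.mem_iff_getElem?.1 ((Finset.mem_sort _).2 hx)

theorem C_eq_univ (hch : inst.ChoresOnly) (t : N) : inst.C t = Finset.univ := by
  simp [C, hch t]

theorem kthChore_card_sub_one_eq_some_iff (hch : inst.ChoresOnly) :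
    inst.kthChore t (Fintype.card M - 1) = some x ↔ ∀ y, (inst.ord t).le y x := by
  let := inst.ord t
  have hne : (Finset.univ : Finset M).Nonempty := ⟨x, Finset.mem_univ x⟩
  have hlast : (Finset.univ.sort (· ≤ ·))[Fintype.card M - 1]? = some (Finset.univ.max' hne) := by
    have h := Finset.max'_eq_sorted_last (s := Finset.univ) (h := hne)
    rw [h, List.getElem?_eq_some_iff]
    simp [Finset.length_sort, Fintype.card_pos_iff.2 ⟨x⟩]
  show ((inst.C t).sort (· ≤ ·))[Fintype.card M - 1]? = some x ↔ _
  rw [C_eq_univ hch, hlast, Option.some_inj, Finset.max'_eq_iff]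
  simp

end kthChore

theorem IsAllocation.eq_of_mem {A : N → Finset M} {x : M} {i t : N} (hA : inst.IsAllocation A)
    (hi : x ∈ A i) (ht : x ∈ A t) : t = i :=
  by_contra fun h => Finset.disjoint_left.1 (hA.1 t i h) ht hi

theorem nPlus_eq_zero (hch : inst.ChoresOnly) (A : N → Finset M) (k : ℕ) : inst.nPlus A k = 0 := by
  simp [nPlus, kthGood, show ∀ t, inst.G t = ∅ from hch]

theorem signature_lex_of_nMinus (hch : inst.ChoresOnly) {A B : N → Finset M} {p : ℕ}
    (hp : p < Fintype.card M) (heq : ∀ q < p, inst.nMinus A q = inst.nMinus B q)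
    (hlt : inst.nMinus A p < inst.nMinus B p) :
    List.Lex (· < ·) (inst.signature A) (inst.signature B) := by
  unfold signature
  simp only [nPlus_eq_zero hch]
  exact List.Lex.append_left _ (List.lex_map_range _ hp heq hlt) _

section reassign

variable [DecidableEq N] {A : N → Finset M} {o : M} {i j : N} {k : ℕ}

theorem IsAllocation.reassign (hA : inst.IsAllocation A) (o : M) (j : N) :
    inst.IsAllocation (reassign A o j) := by
  refine ⟨fun s t hst => Finset.disjoint_left.2 fun x hs ht => ?_, fun x => ?_⟩
  · rw [mem_reassign] at hs ht
    rcases hs with ⟨hxo, rfl⟩ | ⟨hx, hs⟩ <;> rcases ht with ⟨hxo', rfl⟩ | ⟨hx', ht⟩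
    exacts [hst rfl, hx' hxo, hx hxo', Finset.disjoint_left.1 (hA.1 s t hst) hs ht]
  · by_cases hx : x = o
    · exact ⟨j, mem_reassign.2 (.inl ⟨hx, rfl⟩)⟩
    · obtain ⟨t, ht⟩ := hA.2 x
      exact ⟨t, mem_reassign.2 (.inr ⟨hx, ht⟩)⟩

theorem nMinus_reassign (hA : inst.IsAllocation A) (ho : o ∈ A i) (hij : i ≠ j)
    (hi : inst.kthChore i k ≠ some o) :
    inst.nMinus (reassign A o j) k =
      inst.nMinus A k + if inst.kthChore j k = some o then 1 else 0 := by
  have hget : ∀ t, (inst.kthChore t k).elim False (· ∈ reassign A o j t) ↔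
      t = j ∧ inst.kthChore t k = some o ∨ (inst.kthChore t k).elim False (· ∈ A t) := by
    intro t
    cases hc : inst.kthChore t k with
    | none => simp
    | some x =>
      simp only [Option.elim, mem_reassign, Option.some_inj]
      by_cases hx : x = o
      · subst hx
        have hnot : x ∉ A t := fun h => hi (hA.eq_of_mem ho h ▸ hc)
        simp [hnot, and_comm]
      · simp [hx]
  unfold nMinus
  split_ifs with hj
  · have hjA : ¬ (inst.kthChore j k).elim False (· ∈ A j) := by
      rw [hj]
      exact fun h => hij (hA.eq_of_mem ho h).symm
    rw [← Finset.card_insert_of_notMem (by simpa using hjA)]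
    congr 1
    ext t
    rcases eq_or_ne t j with rfl | htj
    · simp [hget, hj]
    · simp [hget, htj]
  · congr 1
    ext t
    rcases eq_or_ne t j with rfl | htj
    · simp [hget, hj]
    · simp [hget, htj]

theorem signature_lex_reassign (hch : inst.ChoresOnly) (hA : inst.IsAllocation A) (ho : o ∈ A i)
    (hij : i ≠ j) {r : ℕ} (hr : inst.kthChore j r = some o)
    (hi : ∀ k ≤ r, inst.kthChore i k ≠ some o) :
    List.Lex (· < ·) (inst.signature A) (inst.signature (reassign A o j)) := by
  refine signature_lex_of_nMinus hch (kthChore_lt_card hr) (fun q hq => ?_) ?_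
  · have hjq : inst.kthChore j q ≠ some o := fun h => hq.ne (kthChore_inj h hr)
    simp [nMinus_reassign hA ho hij (hi q hq.le), hjq]
  · simp [nMinus_reassign hA ho hij (hi r le_rfl), hr]

end reassign

end LexInstance

/-- in a chores-only lexicographic instance, if a rank-maximal
allocation assigns to some agent `i` its worst chore `o` (the `⊳_i`-greatest
element of `M`), then `o` is the worst chore of every agent. -/
theorem rm_worst_chore_common
    {N M : Type} [Fintype N] [Fintype M] [DecidableEq M]
    (inst : LexInstance N M) (hch : inst.ChoresOnly)
    (A : N → Finset M) (hRM : inst.RankMaximal A)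
    (i : N) (o : M) (ho : o ∈ A i) (hmax : ∀ o' : M, (inst.ord i).le o' o) :
    ∀ j : N, ∀ o' : M, (inst.ord j).le o' o := by
  intro j
  obtain ⟨r, hr⟩ :=
    LexInstance.exists_kthChore_eq_some (LexInstance.C_eq_univ hch j ▸ Finset.mem_univ o)
  by_cases hrl : r = Fintype.card M - 1
  · exact (LexInstance.kthChore_card_sub_one_eq_some_iff hch).1 (hrl ▸ hr)
  have hi : ∀ k, inst.kthChore i k = some o → k = Fintype.card M - 1 := fun k hk =>
    LexInstance.kthChore_inj hk ((LexInstance.kthChore_card_sub_one_eq_some_iff hch).2 hmax)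
  have hij : i ≠ j := by
    rintro rfl
    exact hrl (hi r hr)
  have hri : ∀ k ≤ r, inst.kthChore i k ≠ some o := fun k hk hk' => by
    have := LexInstance.kthChore_lt_card hr
    have := hi k hk'
    omega
  exact absurd (LexInstance.signature_lex_reassign hch hRM.1 ho hij hr hri)
    (hRM.2 _ (hRM.1.reassign o j))
end
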